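/- arXiv:2504.18542 — 8 statements merged into one kernel-verified Lean document; each statement's English description precedes it below -/
import Mathlib

section
/- If m is a basic tuple of p partitions of n (i.e., each partition is monotone non-increasing with at least two parts, and 2n ≤ Σ_{j=0}^{p−1}(n − m_{j,1})), then idx(m) ≤ 0. -/
/-- The index of rigidity of a tuple of `p` partitions of `n`. -/
def idx (p n : ℕ) (m : Fin p → List ℕ) : ℤ :=
  2 * (n : ℤ) ^ 2 - ∑ j : Fin p, ((n : ℤ) ^ 2 - ((m j).map (fun x => (x : ℤ) ^ 2)).sum)

/-! Every part of a partition is at most its largest part `m_{j,1}`, so `Σ_ν m_{j,ν}² ≤ m_{j,1} n`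
and the `j`-th summand of `idx` is at least `n (n - m_{j,1})`. Summing over `j`, the basic
condition `Σ_j (n - m_{j,1}) ≥ 2n` bounds the sum below by `2n²`. -/

theorem sum_map_sq_le_headI_mul_sum {l : List ℕ} (h : l.Pairwise (· ≥ ·)) :
    (l.map (fun x : ℕ => (x : ℤ) ^ 2)).sum ≤ (l.headI : ℤ) * ((l.sum : ℕ) : ℤ) := by
  cases l with
  | nil => simp
  | cons a t =>
    obtain ⟨ha, -⟩ := List.pairwise_cons.mp h
    have hle : ∀ x ∈ a :: t, (x : ℤ) ^ 2 ≤ (a : ℤ) * x := by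
      intro x hx
      have hxa : x ≤ a := (List.mem_cons.mp hx).elim le_of_eq (ha x)
      rw [sq]
      exact mul_le_mul_of_nonneg_right (by exact_mod_cast hxa) (Int.natCast_nonneg x)
    calc ((a :: t).map (fun x : ℕ => (x : ℤ) ^ 2)).sum
        ≤ ((a :: t).map (fun x : ℕ => (a : ℤ) * x)).sum := List.sum_le_sum hle
      _ = (a : ℤ) * (((a :: t).sum : ℕ) : ℤ) := by
        rw [List.sum_map_mul_left, Nat.cast_list_sum]

theorem mul_sub_headI_le_sq_sub_sum_map_sq {l : List ℕ} {n : ℕ} (h : l.Pairwise (· ≥ ·))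
    (hsum : l.sum = n) :
    (n : ℤ) * (n - l.headI) ≤ (n : ℤ) ^ 2 - (l.map (fun x : ℕ => (x : ℤ) ^ 2)).sum := by
  have := sum_map_sq_le_headI_mul_sum h
  rw [hsum] at this
  linarith

-- In `idx`, `(m j).map (fun x => (x : ℤ) ^ 2)` elaborates as a map over `m j` coerced to `List ℤ`.
theorem List.map_sq_coe_int (l : List ℕ) :
    (l : List ℤ).map (· ^ 2) = l.map (fun x : ℕ => (x : ℤ) ^ 2) := by
  induction l <;> simp_all

theorem idx_nonpos_of_basic_general (p n : ℕ) (m : Fin p → List ℕ)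
    (hmono : ∀ j, (m j).Pairwise (· ≥ ·))
    (hsum : ∀ j, (m j).sum = n)
    (hbasic : 2 * (n : ℤ) ≤ ∑ j : Fin p, ((n : ℤ) - ((m j).headI : ℤ))) :
    idx p n m ≤ 0 := by
  have hterms : (n : ℤ) * ∑ j : Fin p, ((n : ℤ) - (m j).headI) ≤
      ∑ j : Fin p, ((n : ℤ) ^ 2 - ((m j).map (fun x : ℕ => (x : ℤ) ^ 2)).sum) := by
    rw [Finset.mul_sum]
    exact Finset.sum_le_sum fun j _ => mul_sub_headI_le_sq_sub_sum_map_sq (hmono j) (hsum j)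
  have hbasic' : (n : ℤ) * (2 * n) ≤ (n : ℤ) * ∑ j : Fin p, ((n : ℤ) - (m j).headI) :=
    mul_le_mul_of_nonneg_left hbasic (Int.natCast_nonneg n)
  simp only [idx, List.map_sq_coe_int]
  linarith

/-- A basic tuple of partitions (monotone non-increasing, positive parts summing to `n`,
at least two parts each, and `2n ≤ Σⱼ (n − m_{j,1})`) has `idx m ≤ 0`. -/
theorem idx_nonpos_of_basic (p n : ℕ) (hn : 0 < n) (m : Fin p → List ℕ)
    (hmono : ∀ j, (m j).Pairwise (· ≥ ·))
    (hpos : ∀ j, ∀ x ∈ m j, 0 < x)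
    (hsum : ∀ j, (m j).sum = n)
    (hlen : ∀ j, 2 ≤ (m j).length)
    (hbasic : 2 * (n : ℤ) ≤ ∑ j : Fin p, ((n : ℤ) - ((m j).headI : ℤ))) :
    idx p n m ≤ 0 :=
  idx_nonpos_of_basic_general p n m hmono hsum hbasic
end

section
/- If m is a basic tuple of p partitions of n with idx(m) ≤ 0, then p ≥ 3. -/
/-!
Every largest part is at least `1`, so each summand `n - m_{j,1}` of the basicness condition is at
most `n - 1`. Hence `2n ≤ p (n - 1)`, which fails for `p ≤ 2` since `n ≥ 1`.
-/

theorem List.one_le_headI {l : List ℕ} (hne : l ≠ []) (hpos : ∀ x ∈ l, 0 < x) : 1 ≤ l.headI := by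
  obtain ⟨a, t, rfl⟩ := List.exists_cons_of_ne_nil hne
  exact hpos a List.mem_cons_self

theorem sum_sub_headI_le {ι : Type*} [Fintype ι] (n : ℕ) (m : ι → List ℕ)
    (hne : ∀ j, m j ≠ []) (hpos : ∀ j, ∀ x ∈ m j, 0 < x) :
    ∑ j, ((n : ℤ) - ((m j).headI : ℤ)) ≤ Fintype.card ι * ((n : ℤ) - 1) := by
  calc ∑ j, ((n : ℤ) - ((m j).headI : ℤ))
      ≤ ∑ _j : ι, ((n : ℤ) - 1) := by
        gcongr with j
        exact_mod_cast (m j).one_le_headI (hne j) (hpos j)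
    _ = Fintype.card ι * ((n : ℤ) - 1) := by
        rw [Finset.sum_const, Finset.card_univ, nsmul_eq_mul]

theorem three_le_of_basic_general (p n : ℕ) (hn : 0 < n) (m : Fin p → List ℕ)
    (hpos : ∀ j, ∀ x ∈ m j, 0 < x)
    (hlen : ∀ j, 2 ≤ (m j).length)
    (hbasic : 2 * (n : ℤ) ≤ ∑ j : Fin p, ((n : ℤ) - ((m j).headI : ℤ))) :
    3 ≤ p := by
  have hne : ∀ j, m j ≠ [] := fun j hnil => by simpa [hnil] using hlen j
  have hle := sum_sub_headI_le n m hne hpos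
  rw [Fintype.card_fin] at hle
  by_contra! hp
  have hp2 : (p : ℤ) ≤ 2 := by exact_mod_cast Nat.lt_succ_iff.mp hp
  have hn1 : (1 : ℤ) ≤ n := by exact_mod_cast hn
  nlinarith

/-- A basic tuple of `p` partitions of `n` with `idx m ≤ 0` has at least 3 partitions. -/
theorem three_le_of_basic (p n : ℕ) (hn : 0 < n) (m : Fin p → List ℕ)
    (hmono : ∀ j, (m j).Pairwise (· ≥ ·))
    (hpos : ∀ j, ∀ x ∈ m j, 0 < x)
    (hsum : ∀ j, (m j).sum = n)
    (hlen : ∀ j, 2 ≤ (m j).length)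
    (hbasic : 2 * (n : ℤ) ≤ ∑ j : Fin p, ((n : ℤ) - ((m j).headI : ℤ)))
    (hidx : idx p n m ≤ 0) :
    3 ≤ p :=
  three_le_of_basic_general p n hn m hpos hlen hbasic
end

section
/- If m is a fundamental tuple of p partitions of n, then p ≤ |idx(m)|/2 + 4. -/
/-- `m` is a tuple of `p` partitions of `n`: each `m j` is a monotone non-increasing
list of positive integers summing to `n` with at least two parts. -/
def IsTuple (p n : ℕ) (m : Fin p → List ℕ) : Prop :=
  0 < n ∧ ∀ j, (m j).Pairwise (· ≥ ·) ∧ (∀ x ∈ m j, 0 < x) ∧ (m j).sum = n ∧ 2 ≤ (m j).length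

/-- The tuple is indivisible: no integer `k ≥ 2` divides all the entries. -/
def Indivisible (p : ℕ) (m : Fin p → List ℕ) : Prop :=
  ∀ k : ℕ, (∀ j, ∀ x ∈ m j, k ∣ x) → k = 1

/-- The tuple is basic: it is a tuple of partitions, `2n ≤ Σⱼ (n − m_{j,1})`,
and it is indivisible. -/
def IsBasic (p n : ℕ) (m : Fin p → List ℕ) : Prop :=
  IsTuple p n m ∧ 2 * (n : ℤ) ≤ (∑ j : Fin p, ((n : ℤ) - ((m j).headI : ℤ)))
    ∧ Indivisible p m

/-- The tuple is fundamental: it is basic, or it is a positive integer multiple `k·m'`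
of a basic tuple `m'` with `idx m' ≠ 0`. -/
def IsFundamental (p n : ℕ) (m : Fin p → List ℕ) : Prop :=
  ∃ (k n' : ℕ) (m' : Fin p → List ℕ), 0 < k ∧ n = k * n' ∧
    (∀ j, m j = (m' j).map (fun x => k * x)) ∧ IsBasic p n' m' ∧
    (k = 1 ∨ idx p n' m' ≠ 0)


def sqSum (l : List ℕ) : ℤ := (l.map fun x : ℕ => (x : ℤ) ^ 2).sum

/-- In `idx` the partition is first coerced to `List ℤ` and then squared, so this is not `rfl`. -/
lemma sum_map_sq_coe (l : List ℕ) : (l.map (fun x => (x : ℤ) ^ 2)).sum = sqSum l := by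
  induction l with
  | nil => rfl
  | cons a t ih => simpa [sqSum] using ih

lemma idx_eq (p n : ℕ) (m : Fin p → List ℕ) :
    idx p n m = 2 * (n : ℤ) ^ 2 - ∑ j, ((n : ℤ) ^ 2 - sqSum (m j)) := by
  simp only [idx, sum_map_sq_coe]

lemma sqSum_cons (a : ℕ) (l : List ℕ) : sqSum (a :: l) = (a : ℤ) ^ 2 + sqSum l := by
  simp [sqSum]

lemma sqSum_map_mul (k : ℕ) (l : List ℕ) : sqSum (l.map (k * ·)) = (k : ℤ) ^ 2 * sqSum l := by
  simp only [sqSum, List.map_map, Function.comp_def, Nat.cast_mul, mul_pow, List.sum_map_mul_left]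

lemma idx_map_mul (p k n : ℕ) (m : Fin p → List ℕ) :
    idx p (k * n) (fun j => (m j).map (k * ·)) = (k : ℤ) ^ 2 * idx p n m := by
  simp only [idx_eq, sqSum_map_mul, mul_sub, Finset.mul_sum]
  push_cast
  ring_nf

lemma sqSum_le_mul_sum {l : List ℕ} {c : ℕ} (hc : ∀ x ∈ l, x ≤ c) :
    sqSum l ≤ c * l.sum := by
  induction l with
  | nil => simp [sqSum]
  | cons a t ih =>
    simp only [List.forall_mem_cons] at hc
    have ha : (a : ℤ) ^ 2 ≤ c * a := by rw [sq]; gcongr; exact_mod_cast hc.1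
    rw [sqSum_cons, List.sum_cons, Nat.cast_add]
    linarith [ih hc.2]

lemma sq_sub_four_mul_add_le {A e q : ℤ} (hA : 0 ≤ A) (he : 1 ≤ e) (hqe : q ≤ e * e)
    (hqA : q ≤ A * e) :
    ((A + e) ^ 2 - 4) * e + 2 * (A + e) ≤ (A + e) * ((A + e) ^ 2 - (A ^ 2 + q)) := by
  have hdiff : (A + e) * ((A + e) ^ 2 - (A ^ 2 + q)) - (((A + e) ^ 2 - 4) * e + 2 * (A + e))
      = (A + e) * (A * e - q) + 2 * (e - A) := by ring
  rcases le_total A e with h | h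
  · linarith [mul_nonneg (by linarith : 0 ≤ A + e) (sub_nonneg.2 hqA)]
  · have h2 : 2 ≤ (A + e) * e := by nlinarith
    have : 2 * (A - e) ≤ (A + e) * (A * e - q) :=
      calc 2 * (A - e) ≤ (A + e) * e * (A - e) := by gcongr
        _ = (A + e) * (A * e - e * e) := by ring
        _ ≤ (A + e) * (A * e - q) := by gcongr
    linarith

lemma sq_sub_four_mul_sub_headI_add_le {l : List ℕ} {n : ℕ} (hl : l.Pairwise (· ≥ ·))
    (hpos : ∀ x ∈ l, 0 < x) (hsum : l.sum = n) (hlen : 2 ≤ l.length) :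
    ((n : ℤ) ^ 2 - 4) * (n - l.headI) + 2 * n ≤ n * ((n : ℤ) ^ 2 - sqSum l) := by
  obtain ⟨a, t, ht, rfl⟩ : ∃ a t, t ≠ [] ∧ l = a :: t := by
    match l, hlen with
    | a :: b :: t, _ => exact ⟨a, b :: t, List.cons_ne_nil _ _, rfl⟩
  subst hsum
  have he : 0 < t.sum := List.sum_pos t (fun x hx => hpos x (List.mem_cons_of_mem a hx)) ht
  have hqe : sqSum t ≤ t.sum * t.sum := sqSum_le_mul_sum fun _ => List.le_sum_of_mem
  have hqA : sqSum t ≤ a * t.sum := sqSum_le_mul_sum (List.pairwise_cons.1 hl).1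
  simp only [List.headI, sqSum_cons, List.sum_cons, Nat.cast_add, add_sub_cancel_left]
  exact sq_sub_four_mul_add_le (Int.natCast_nonneg a) (by exact_mod_cast he) hqe hqA

lemma idx_le_of_isTuple {p n : ℕ} {m : Fin p → List ℕ} (ht : IsTuple p n m)
    (hdef : 2 * (n : ℤ) ≤ ∑ j, ((n : ℤ) - (m j).headI)) :
    idx p n m ≤ 8 - 2 * p := by
  obtain ⟨hn, hparts⟩ := ht
  obtain ⟨j₀, -⟩ := Finset.nonempty_of_sum_ne_zero fun h => by rw [h] at hdef; omega
  have hn2 : 2 ≤ n := by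
    obtain ⟨-, hpos, hsum, hlen⟩ := hparts j₀
    exact hsum ▸ hlen.trans (List.length_le_sum_of_one_le _ hpos)
  have hsum := Finset.sum_le_sum fun j (_ : j ∈ Finset.univ) =>
    sq_sub_four_mul_sub_headI_add_le (hparts j).1 (hparts j).2.1 (hparts j).2.2.1 (hparts j).2.2.2
  rw [Finset.sum_add_distrib, ← Finset.mul_sum, Finset.sum_const,
    Finset.card_univ, Fintype.card_fin, nsmul_eq_mul] at hsum
  have hfac : ((n : ℤ) ^ 2 - 4) * (2 * n) ≤ ((n : ℤ) ^ 2 - 4) * ∑ j, ((n : ℤ) - (m j).headI) :=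
    mul_le_mul_of_nonneg_left hdef (by nlinarith)
  have hmul : (n : ℤ) * (2 * n ^ 2 - 8 + 2 * p) ≤ n * ∑ j, ((n : ℤ) ^ 2 - sqSum (m j)) := by
    rw [Finset.mul_sum]
    linarith
  have hdiv := le_of_mul_le_mul_left hmul (by exact_mod_cast hn)
  rw [idx_eq]
  linarith

/-- If `m` is a fundamental tuple of `p` partitions of `n`, then `p ≤ |idx m|/2 + 4`. -/
theorem p_bound_of_fundamental (p n : ℕ) (m : Fin p → List ℕ)
    (hfund : IsFundamental p n m) :
    (p : ℤ) ≤ |idx p n m| / 2 + 4 := by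
  obtain ⟨k, n', m', hk, rfl, hm, ⟨ht, hdef, -⟩, -⟩ := hfund
  obtain rfl : m = fun j => (m' j).map (k * ·) := funext hm
  have hbound := idx_le_of_isTuple ht hdef
  have hscale : |idx p n' m'| ≤ |idx p (k * n') fun j => (m' j).map (k * ·)| := by
    rw [idx_map_mul, abs_mul, abs_pow, Nat.abs_cast]
    exact le_mul_of_one_le_left (abs_nonneg _) (one_le_pow₀ (by exact_mod_cast hk))
  have := neg_abs_le (idx p n' m')
  omega
end

section
/- If m is a basic tuple of p partitions of n, then n ≤ 3·|idx(m)| + 6. -/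
theorem List.le_headI_of_pairwise_ge {α : Type*} [Preorder α] [Inhabited α] {L : List α}
    (hL : L.Pairwise (· ≥ ·)) {x : α} (hx : x ∈ L) : x ≤ L.headI := by
  cases L with
  | nil => simp at hx
  | cons y t =>
    rcases List.mem_cons.1 hx with rfl | h
    · exact le_rfl
    · exact List.rel_of_pairwise_cons hL h

/-- The left-hand side is `f (L.sum mod e)` for `f x = x (e - x)` when `q = L.sum / e`, and at most
`0` for other `q`. The induction uses `f (x + y) = f x + f y - 2 x y` and
`f (x + y - e) = f x + f y - 2 (e - x) (e - y)`. -/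
theorem List.sub_mul_sub_le_sum_map_mul_sub {e : ℤ} {L : List ℕ} (hL : ∀ x ∈ L, (x : ℤ) ≤ e)
    (q : ℤ) :
    (L.sum - e * q) * (e * (q + 1) - L.sum) ≤ (L.map fun x : ℕ => (x : ℤ) * (e - x)).sum := by
  induction L generalizing q with
  | nil =>
    have hq : 0 ≤ q * (q + 1) := by rcases le_or_gt 0 q with h | h <;> nlinarith
    simp only [List.sum_nil, Nat.cast_zero, List.map_nil]
    nlinarith [mul_nonneg (sq_nonneg e) hq]
  | cons x t ih =>
    simp only [List.forall_mem_cons] at hL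
    simp only [List.sum_cons, List.map_cons, Nat.cast_add]
    have hx : (0 : ℤ) ≤ x := x.cast_nonneg
    rcases le_or_gt (e * q) t.sum with h | h
    · nlinarith [ih hL.2 q, mul_nonneg hx (sub_nonneg.2 h)]
    · nlinarith [ih hL.2 (q - 1), mul_nonneg (sub_nonneg.2 hL.1) (sub_nonneg.2 h.le)]

-- The left-hand side coerces `L` to `List ℤ` through the list monad, as `idx` does.
theorem List.map_sq_coe (L : List ℕ) :
    (L.map fun x => (x : ℤ) ^ 2) = L.map fun x : ℕ => (x : ℤ) ^ 2 :=
  (congrArg _ (List.flatMap_pure_eq_map _ _)).trans (List.map_map ..)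

theorem exists_two_le_dvd_of_dvd_add_add {a b c n : ℤ} (ha : 0 < a) (hb : 0 < b) (hc : 0 < c)
    (hsum : a + b + c = n) (hn : 7 ≤ n) (han : a ∣ n) (hbn : b ∣ n) (hcn : c ∣ n) :
    ∃ k, 2 ≤ k ∧ k ∣ a ∧ k ∣ b ∧ k ∣ c := by
  wlog hba : b ≤ a generalizing a b c
  · obtain ⟨k, hk, hkb, hka, hkc⟩ := this hb ha hc (by linarith) hbn han hcn (by linarith)
    exact ⟨k, hk, hka, hkb, hkc⟩
  wlog hca : c ≤ a generalizing a b c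
  · obtain ⟨k, hk, hkc, hkb, hka⟩ :=
      this hc hb ha (by linarith) hcn hbn han (by linarith) (by linarith)
    exact ⟨k, hk, hka, hkb, hkc⟩
  wlog hcb : c ≤ b generalizing a b c
  · obtain ⟨k, hk, hka, hkc, hkb⟩ := this ha hc hb (by linarith) han hcn hbn hca hba (by linarith)
    exact ⟨k, hk, hka, hkb, hkc⟩
  -- `(n / a, n / b, n / c)` is `(2, 3, 6)`, `(2, 4, 4)` or `(3, 3, 3)`; `c` divides `a` and `b`.
  obtain ⟨i, hi⟩ := han
  have : i ≤ 3 := by nlinarith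
  have : 2 ≤ i := by nlinarith
  interval_cases i
  · obtain ⟨j, hj⟩ := hbn
    have : j ≤ 4 := by nlinarith
    have : 3 ≤ j := by nlinarith
    interval_cases j
    · exact ⟨c, by omega, ⟨3, by omega⟩, ⟨2, by omega⟩, dvd_rfl⟩
    · exact ⟨c, by omega, ⟨2, by omega⟩, ⟨1, by omega⟩, dvd_rfl⟩
  · exact ⟨c, by omega, ⟨1, by omega⟩, ⟨1, by omega⟩, dvd_rfl⟩

/-- `L.headI` is the largest part when `L` is non-increasing. -/
def defect (L : List ℕ) : ℤ :=
  (L.map fun x : ℕ => (x : ℤ) * (L.headI - x)).sum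

theorem defect_eq_headI_mul_sum_sub (L : List ℕ) :
    defect L = L.headI * L.sum - (L.map fun x : ℕ => (x : ℤ) ^ 2).sum := by
  unfold defect
  generalize (L.headI : ℤ) = a
  induction L with
  | nil => simp
  | cons x t ih => simp only [List.map_cons, List.sum_cons, ih]; push_cast; ring

theorem eq_headI_of_defect_eq_zero {L : List ℕ} (hL : L.Pairwise (· ≥ ·))
    (hpos : ∀ x ∈ L, 0 < x) (hD : defect L = 0) : ∀ x ∈ L, x = L.headI := by
  intro x hx
  by_contra hne
  have hx1 : (1 : ℤ) ≤ x := by exact_mod_cast hpos x hx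
  have hxa : (x : ℤ) + 1 ≤ L.headI := by
    exact_mod_cast (List.le_headI_of_pairwise_ge hL hx).lt_of_ne hne
  have hterm : (x : ℤ) * (L.headI - x) ≤ defect L := by
    refine List.single_le_sum ?_ _ (List.mem_map_of_mem hx)
    simp only [List.mem_map]
    rintro _ ⟨y, hy, rfl⟩
    have : (y : ℤ) ≤ L.headI := by exact_mod_cast List.le_headI_of_pairwise_ge hL hy
    exact mul_nonneg y.cast_nonneg (sub_nonneg.2 this)
  nlinarith

/-- What the argument uses about a partition of `n` with largest part `a` and defect `D`. -/
structure DefectBounds (n a D : ℤ) : Prop where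
  one_le : 1 ≤ a
  lt : a < n
  sub_mul_sub_le : ∀ q : ℤ, (n - a * q) * (a * (q + 1) - n) ≤ D
  two_mul_sub_one_le : D ≠ 0 → a ∣ n → 2 * (a - 1) ≤ D

namespace DefectBounds

theorem of_pairwise_ge {L : List ℕ} (hL : L.Pairwise (· ≥ ·)) (hpos : ∀ x ∈ L, 0 < x)
    (hlen : 2 ≤ L.length) : DefectBounds L.sum L.headI (defect L) := by
  have hle : ∀ x ∈ L, (x : ℤ) ≤ L.headI := fun x hx => by
    exact_mod_cast List.le_headI_of_pairwise_ge hL hx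
  obtain ⟨hone, hlt⟩ : 1 ≤ L.headI ∧ L.headI < L.sum := by
    obtain _ | ⟨y, _ | ⟨z, t⟩⟩ := L
    · simp at hlen
    · simp at hlen
    · simp only [List.mem_cons, forall_eq_or_imp] at hpos
      simp only [List.headI_cons, List.sum_cons]
      omega
  refine ⟨by exact_mod_cast hone, by exact_mod_cast hlt,
    List.sub_mul_sub_le_sum_map_mul_sub hle, fun hD ⟨k, hk⟩ => ?_⟩
  obtain ⟨x, hx, hne⟩ : ∃ x ∈ L, x ≠ L.headI := by
    by_contra! h
    refine hD (List.sum_eq_zero ?_)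
    simp only [List.mem_map]
    rintro _ ⟨x, hx, rfl⟩
    rw [h x hx, sub_self, mul_zero]
  have hx1 : (1 : ℤ) ≤ x := by exact_mod_cast hpos x hx
  have hxa : (x : ℤ) + 1 ≤ L.headI := by
    exact_mod_cast (List.le_headI_of_pairwise_ge hL hx).lt_of_ne hne
  -- The other parts sum to `-x` modulo `L.headI`, so they contribute `x (L.headI - x)` at least.
  have hrest := List.sub_mul_sub_le_sum_map_mul_sub (L := L.erase x)
    (fun y hy => hle y (List.mem_of_mem_erase hy)) (k - 1)
  have hsplit := List.sum_map_erase (fun y : ℕ => (y : ℤ) * (L.headI - y)) hx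
  have hsum : (x : ℤ) + (L.erase x).sum = L.sum := by exact_mod_cast List.sum_erase hx
  unfold defect
  nlinarith [mul_nonneg (sub_nonneg.2 hx1) (sub_nonneg.2 hxa)]

section

variable {n a D : ℤ}

theorem pos (h : DefectBounds n a D) : 0 < a := h.one_le

theorem emod_mul_le (h : DefectBounds n a D) : n % a * (a - n % a) ≤ D :=
  calc n % a * (a - n % a) = (n - a * (n / a)) * (a * (n / a + 1) - n) := by
        rw [Int.emod_def]; ring
    _ ≤ D := h.sub_mul_sub_le (n / a)

theorem nonneg (h : DefectBounds n a D) : 0 ≤ D := by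
  have := Int.emod_nonneg n h.pos.ne'
  have := Int.emod_lt_of_pos n h.pos
  nlinarith [h.emod_mul_le]

theorem dvd_of_eq_zero (h : DefectBounds n a D) (hD : D = 0) : a ∣ n := by
  have := Int.emod_nonneg n h.pos.ne'
  have := Int.emod_lt_of_pos n h.pos
  have := h.emod_mul_le
  exact Int.dvd_of_emod_eq_zero (by nlinarith)

theorem sub_one_le (h : DefectBounds n a D) (hD : D ≠ 0) : a - 1 ≤ D := by
  by_cases hdvd : a ∣ n
  · linarith [h.two_mul_sub_one_le hD hdvd, h.one_le]
  · have := Int.emod_lt_of_pos n h.pos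
    have hr : 0 < n % a := (Int.emod_nonneg n h.pos.ne').lt_of_ne' (mt Int.dvd_of_emod_eq_zero hdvd)
    nlinarith [h.emod_mul_le, mul_nonneg (by omega : 0 ≤ n % a - 1) (by omega : 0 ≤ a - n % a - 1)]

theorem two_mul_le (h : DefectBounds n a D) (hD : 3 * D ≤ n - 7) : 2 * a ≤ n := by
  by_cases hD0 : D = 0
  · obtain ⟨i, hi⟩ := h.dvd_of_eq_zero hD0
    have := h.one_le
    have := h.lt
    have : 2 ≤ i := by by_contra!; nlinarith
    nlinarith
  · linarith [h.sub_one_le hD0, h.one_le]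

end

/-- Once `b ≤ a`, necessarily `a = n / 2` and `b = n / j` with `j ∈ {3, 4, 5}`; for `j = 5` the
remainder of `n` modulo `e = 3 n / 10` is `n / 10`. -/
theorem eq_zero_of_dvd_of_dvd {n e D a b : ℤ} (h : DefectBounds n e D) (ha : 0 < a) (hb : 0 < b)
    (han : a ∣ n) (hbn : b ∣ n) (hsum : a + b + e = n) (hD : 3 * D ≤ n - 7) : D = 0 := by
  wlog hba : b ≤ a generalizing a b
  · exact this hb ha hbn han (by linarith) (by linarith)
  by_contra hD0
  have he := h.sub_one_le hD0
  have := h.one_le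
  obtain ⟨i, rfl⟩ := han
  obtain rfl : i = 2 := by
    have : i < 3 := by nlinarith
    have : 1 < i := by nlinarith
    omega
  obtain ⟨j, hj⟩ := hbn
  have : 2 < j := by nlinarith
  have : j < 6 := by nlinarith
  interval_cases j
  · linarith [h.two_mul_sub_one_le hD0 ⟨6, by linarith⟩]
  · linarith [h.two_mul_sub_one_le hD0 ⟨4, by linarith⟩]
  · nlinarith [h.sub_mul_sub_le 3, sq_nonneg (3 * b - 5)]

theorem eq_zero_of_add_add_eq {n x y z Dx Dy Dz : ℤ} (hx : DefectBounds n x Dx)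
    (hy : DefectBounds n y Dy) (hz : DefectBounds n z Dz) (hsum : x + y + z = n)
    (hD : 3 * (Dx + Dy + Dz) ≤ n - 7) : Dx = 0 := by
  have := hx.nonneg
  have := hy.nonneg
  have := hz.nonneg
  by_contra hx0
  have hy0 : Dy = 0 := by
    by_contra hy0
    linarith [hx.sub_one_le hx0, hy.sub_one_le hy0, hz.two_mul_le (by linarith), hx.one_le]
  have hz0 : Dz = 0 := by
    by_contra hz0
    linarith [hx.sub_one_le hx0, hz.sub_one_le hz0, hy.two_mul_le (by linarith), hx.one_le]
  exact hx0 <| hx.eq_zero_of_dvd_of_dvd hy.pos hz.pos (hy.dvd_of_eq_zero hy0)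
    (hz.dvd_of_eq_zero hz0) (by linarith) (by linarith)

theorem eq_zero_and_exists_dvd {p : ℕ} {n : ℤ} {a D : Fin p → ℤ}
    (h : ∀ j, DefectBounds n (a j) (D j)) (hsum : ∑ j, (n - a j) = 2 * n)
    (hD : 3 * ∑ j, D j ≤ n - 7) : (∀ j, D j = 0) ∧ ∃ k, 2 ≤ k ∧ ∀ j, k ∣ a j := by
  have hn : 7 ≤ n := by linarith [Finset.sum_nonneg fun i (_ : i ∈ Finset.univ) => (h i).nonneg]
  have h3D : ∀ j, 3 * D j ≤ n - 7 := fun j => by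
    linarith [Finset.single_le_sum (fun i _ => (h i).nonneg) (Finset.mem_univ j)]
  have h2a : ∀ j, 2 * a j ≤ n := fun j => (h j).two_mul_le (h3D j)
  have hp4 : (p : ℤ) * n ≤ 4 * n := by
    have := Finset.card_nsmul_le_sum Finset.univ (fun j => 2 * (n - a j)) n fun j _ => by
      linarith [h2a j]
    rw [← Finset.mul_sum, hsum] at this
    simp only [Finset.card_univ, Fintype.card_fin, nsmul_eq_mul] at this
    linarith
  have hp3 : 2 * n ≤ p * (n - 1) := by
    have := Finset.sum_le_card_nsmul Finset.univ (fun j => n - a j) (n - 1) fun j _ => by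
      linarith [(h j).one_le]
    rwa [hsum, Finset.card_univ, Fintype.card_fin, nsmul_eq_mul] at this
  obtain rfl | rfl : p = 3 ∨ p = 4 := by
    have : p ≤ 4 := by exact_mod_cast le_of_mul_le_mul_right hp4 (by linarith)
    have : 3 ≤ p := by
      by_contra!
      have : (p : ℤ) ≤ 2 := by exact_mod_cast (by omega : p ≤ 2)
      nlinarith
    omega
  · rw [Fin.sum_univ_three] at hsum hD
    have hzero : ∀ j, D j = 0 := by
      intro j
      fin_cases j
      · exact (h 0).eq_zero_of_add_add_eq (h 1) (h 2) (by linarith) (by linarith)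
      · exact (h 1).eq_zero_of_add_add_eq (h 0) (h 2) (by linarith) (by linarith)
      · exact (h 2).eq_zero_of_add_add_eq (h 0) (h 1) (by linarith) (by linarith)
    obtain ⟨k, hk, h0, h1, h2⟩ := exists_two_le_dvd_of_dvd_add_add (h 0).pos (h 1).pos
      (h 2).pos (by linarith) hn ((h 0).dvd_of_eq_zero (hzero 0))
      ((h 1).dvd_of_eq_zero (hzero 1)) ((h 2).dvd_of_eq_zero (hzero 2))
    refine ⟨hzero, k, hk, fun j => ?_⟩
    fin_cases j <;> assumption
  · rw [Fin.sum_univ_four] at hsum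
    have hhalf : ∀ j, 2 * a j = n := by
      intro j
      fin_cases j <;> simp only [Fin.zero_eta, Fin.mk_one, Fin.reduceFinMk, Fin.isValue] <;>
        linarith [h2a 0, h2a 1, h2a 2, h2a 3]
    refine ⟨fun j => ?_, a 0, by linarith [hhalf 0], fun j => ⟨1, by linarith [hhalf 0, hhalf j]⟩⟩
    by_contra hD0
    linarith [(h j).sub_one_le hD0, h3D j, hhalf j]

end DefectBounds

theorem IsTuple.defectBounds {p n : ℕ} {m : Fin p → List ℕ} (h : IsTuple p n m) (j : Fin p) :
    DefectBounds n (m j).headI (defect (m j)) := by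
  obtain ⟨hL, hpos, hsum, hlen⟩ := h.2 j
  exact hsum ▸ DefectBounds.of_pairwise_ge hL hpos hlen

theorem IsTuple.neg_idx_eq {p n : ℕ} {m : Fin p → List ℕ} (h : IsTuple p n m) :
    -idx p n m = (∑ j, ((n : ℤ) - (m j).headI) - 2 * n) * n + ∑ j, defect (m j) := by
  have hterm : ∀ j, (n : ℤ) ^ 2 - ((m j).map fun x => (x : ℤ) ^ 2).sum
      = ((n : ℤ) - (m j).headI) * n + defect (m j) := fun j => by
    rw [List.map_sq_coe, defect_eq_headI_mul_sum_sub, (h.2 j).2.2.1]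
    ring
  rw [idx, Finset.sum_congr rfl fun j _ => hterm j, Finset.sum_add_distrib, ← Finset.sum_mul]
  ring

theorem IsTuple.le_three_mul_sum_defect_add_six {p n : ℕ} {m : Fin p → List ℕ}
    (htuple : IsTuple p n m) (hindiv : Indivisible p m)
    (hS : ∑ j, ((n : ℤ) - (m j).headI) = 2 * n) : (n : ℤ) ≤ 3 * ∑ j, defect (m j) + 6 := by
  by_contra! h
  obtain ⟨hzero, k, hk, hdvd⟩ :=
    DefectBounds.eq_zero_and_exists_dvd htuple.defectBounds hS (by linarith)
  have := hindiv k.natAbs fun j x hx => by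
    obtain ⟨hL, hpos, -⟩ := htuple.2 j
    rw [eq_headI_of_defect_eq_zero hL hpos (hzero j) x hx]
    exact Int.dvd_natCast.mp (hdvd j)
  omega

/-- If `m` is a basic tuple of `p` partitions of `n`, then `n ≤ 3·|idx m| + 6`. -/
theorem ord_bound_of_basic (p n : ℕ) (m : Fin p → List ℕ)
    (hbasic : IsBasic p n m) :
    (n : ℤ) ≤ 3 * |idx p n m| + 6 := by
  obtain ⟨htuple, hS, hindiv⟩ := hbasic
  have hD : 0 ≤ ∑ j, defect (m j) :=
    Finset.sum_nonneg fun j _ => (htuple.defectBounds j).nonneg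
  have hidx := htuple.neg_idx_eq
  have hn : (0 : ℤ) ≤ n := n.cast_nonneg
  rw [abs_of_nonpos (by nlinarith)]
  rcases hS.lt_or_eq with hlt | heq
  · nlinarith
  · rw [← heq, sub_self, zero_mul, zero_add] at hidx
    linarith [htuple.le_three_mul_sum_defect_add_six hindiv heq.symm]
end

section
/- If m is a basic tuple of p partitions of n with p ≥ 4, then n ≤ |idx(m)| + 2. -/
/-- delta of a partition: sum over tail of x*(head - x). -/
def dlt (l : List ℕ) : ℤ :=
  (l.tail.map (fun x : ℕ => (x : ℤ) * ((l.headI : ℤ) - (x : ℤ)))).sum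

/-- The inner sum in `idx` equals a clean ℕ→ℤ map sum. -/
lemma idx_inner (l : List ℕ) :
    ((l.map (fun x => (x : ℤ) ^ 2)).sum : ℤ)
      = (l.map (fun x : ℕ => (x : ℤ) ^ 2)).sum := by
  induction l with
  | nil => simp
  | cons x r ih =>
    simp only [List.map_cons, List.sum_cons] at *
    rw [← ih]
    simp [List.flatMap_cons]

lemma sum_map_mul_sub (t : List ℕ) (c : ℤ) :
    (t.map (fun x : ℕ => (x : ℤ) * (c - (x : ℤ)))).sum
      = c * (t.sum : ℤ) - (t.map (fun x : ℕ => (x : ℤ) ^ 2)).sum := by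
  induction t with
  | nil => simp
  | cons x r ih =>
    simp only [List.map_cons, List.sum_cons, Nat.cast_add, ih]
    ring

lemma sum_map_mul_const (t : List ℕ) (c : ℤ) :
    (t.map (fun x : ℕ => (x : ℤ) * c)).sum = (t.sum : ℤ) * c := by
  induction t with
  | nil => simp
  | cons x r ih =>
    simp only [List.map_cons, List.sum_cons, Nat.cast_add, ih]
    ring

lemma facts (n : ℕ) (l : List ℕ) (hs : l.Pairwise (· ≥ ·)) (hpos : ∀ x ∈ l, 0 < x)
    (hsum : l.sum = n) (hlen : 2 ≤ l.length) :
    ((n : ℤ) ^ 2 - (l.map (fun x : ℕ => (x : ℤ) ^ 2)).sum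
        = (n : ℤ) * ((n : ℤ) - (l.headI : ℤ)) + dlt l)
    ∧ 0 ≤ dlt l
    ∧ 1 ≤ (n : ℤ) - (l.headI : ℤ)
    ∧ ((n : ℤ) - (l.headI : ℤ)) * ((l.headI : ℤ) - ((n : ℤ) - (l.headI : ℤ))) ≤ dlt l := by
  match l, hlen with
  | a :: b :: r, _ =>
    have hsc : a + (b :: r).sum = n := by simpa using hsum
    have hle : ∀ x ∈ b :: r, x ≤ a := fun x hx => (List.pairwise_cons.mp hs).1 x hx
    have hts : (((b :: r).sum : ℕ) : ℤ) = (n : ℤ) - a := by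
      have h := congrArg (Nat.cast : ℕ → ℤ) hsc
      rw [Nat.cast_add] at h
      linarith
    have hdlt : dlt (a :: b :: r)
        = ((b :: r).map (fun x : ℕ => (x : ℤ) * ((a : ℤ) - (x : ℤ)))).sum := rfl
    have hb1 : (1 : ℤ) ≤ (n : ℤ) - a := by
      have hb : 0 < b := hpos b (by simp)
      have hble : b ≤ (b :: r).sum := List.single_le_sum (fun _ _ => Nat.zero_le _) _ (by simp)
      have han : a + 1 ≤ n := by omega
      have h := congrArg (Nat.cast : ℕ → ℤ) hsc
      rw [Nat.cast_add] at h
      have : ((b :: r).sum : ℤ) ≥ 1 := by exact_mod_cast Nat.one_le_iff_ne_zero.mpr (by omega)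
      linarith
    refine ⟨?_, ?_, hb1, ?_⟩
    · rw [hdlt, sum_map_mul_sub, hts]
      show (n : ℤ) ^ 2 - (((a : ℤ) ^ 2) + ((b :: r).map (fun x : ℕ => (x : ℤ) ^ 2)).sum) = _
      rw [show (a :: b :: r).headI = a from rfl]
      ring
    · rw [hdlt]
      apply List.sum_nonneg
      intro z hz
      rw [List.mem_map] at hz
      obtain ⟨x, hx, rfl⟩ := hz
      have h1 : (x : ℤ) ≤ a := by exact_mod_cast hle x hx
      have h0 : (0 : ℤ) ≤ (x : ℤ) := Int.natCast_nonneg x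
      nlinarith
    · rw [hdlt]
      show ((n : ℤ) - a) * ((a : ℤ) - ((n : ℤ) - a)) ≤ _
      have step : (((b :: r).map (fun x : ℕ => (x : ℤ) * ((a : ℤ) - ((n : ℤ) - a)))).sum)
          ≤ ((b :: r).map (fun x : ℕ => (x : ℤ) * ((a : ℤ) - (x : ℤ)))).sum := by
        apply List.sum_le_sum
        intro x hx
        have h0 : (0 : ℤ) ≤ (x : ℤ) := Int.natCast_nonneg x
        have hxe : (x : ℤ) ≤ (n : ℤ) - a := by
          rw [← hts]
          exact_mod_cast List.single_le_sum (fun (y : ℕ) (_ : y ∈ b :: r) => Nat.zero_le y) x hx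
        nlinarith
      calc ((n : ℤ) - a) * ((a : ℤ) - ((n : ℤ) - a))
          = (((b :: r).sum : ℕ) : ℤ) * ((a : ℤ) - ((n : ℤ) - a)) := by rw [hts]
        _ = (((b :: r).map (fun x : ℕ => (x : ℤ) * ((a : ℤ) - ((n : ℤ) - a)))).sum) :=
            (sum_map_mul_const _ _).symm
        _ ≤ _ := step

lemma dich (n : ℕ) (l : List ℕ) (hs : l.Pairwise (· ≥ ·)) (hpos : ∀ x ∈ l, 0 < x)
    (hsum : l.sum = n) (hlen : 2 ≤ l.length) (h2 : 2 * l.headI = n) :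
    l = [l.headI, l.headI] ∨ ((n : ℤ) - 2 ≤ dlt l) := by
  match l, hlen with
  | a :: b :: r, _ =>
    have hhead : (a :: b :: r).headI = a := rfl
    have hsc : a + (b :: r).sum = n := by simpa using hsum
    have h2' : 2 * a = n := h2
    have hts : (b :: r).sum = a := by omega
    have hsorted : ∀ x ∈ b :: r, x ≤ a := fun x hx => (List.pairwise_cons.mp hs).1 x hx
    have hsorted2 : ∀ x ∈ r, x ≤ b :=
      fun x hx => (List.pairwise_cons.mp (List.pairwise_cons.mp hs).2).1 x hx
    have hpos' : ∀ x ∈ b :: r, 0 < x := fun x hx => hpos x (List.mem_cons_of_mem _ hx)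
    have hapos : 0 < a := hpos a List.mem_cons_self
    rcases r with _ | ⟨c, s⟩
    · -- l = [a, b], b = a
      left
      have hba : b = a := by
        have h1 : (([b] : List ℕ)).sum = a := hts
        simpa using h1
      rw [hhead, hba]
    · -- tail has ≥ 2 elements; all tail elements < a, so dlt ≥ 2(a-1) = n - 2
      right
      have hlt : ∀ x ∈ b :: c :: s, x < a := by
        intro x hx
        rcases Nat.lt_or_ge x a with h | h
        · exact h
        · exfalso
          have hxa : x = a := le_antisymm (hsorted x hx) h
          have hxb : x ≤ b := by
            rcases List.mem_cons.mp hx with h' | h'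
            · omega
            · exact hsorted2 x h'
          have hcpos : 0 < c := hpos' c (by simp)
          have hsum2 : b + c + s.sum = a := by
            have := hts
            simp only [List.sum_cons] at this
            omega
          omega
      have key : ∀ x ∈ b :: c :: s, (a : ℤ) - 1 ≤ (x : ℤ) * ((a : ℤ) - x) := by
        intro x hx
        have h1 : 1 ≤ x := hpos' x hx
        have h2x : x + 1 ≤ a := hlt x hx
        have h1' : (1 : ℤ) ≤ (x : ℤ) := by exact_mod_cast h1
        have h2'' : (x : ℤ) + 1 ≤ (a : ℤ) := by exact_mod_cast h2x
        nlinarith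
      have hdlt : dlt (a :: b :: c :: s)
          = ((b :: c :: s).map (fun x : ℕ => (x : ℤ) * ((a : ℤ) - (x : ℤ)))).sum := rfl
      rw [hdlt]
      simp only [List.map_cons, List.sum_cons]
      have hbb := key b (by simp)
      have hcc := key c (by simp)
      have hsnn : (0 : ℤ) ≤ (s.map (fun x : ℕ => (x : ℤ) * ((a : ℤ) - x))).sum := by
        apply List.sum_nonneg
        intro z hz
        rw [List.mem_map] at hz
        obtain ⟨x, hx, rfl⟩ := hz
        have hxt : x ∈ b :: c :: s := by simp [hx]
        have hxa : (x : ℤ) ≤ a := by exact_mod_cast hsorted x hxt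
        have h0 : (0 : ℤ) ≤ (x : ℤ) := Int.natCast_nonneg x
        nlinarith
      have hna : (n : ℤ) = 2 * a := by exact_mod_cast h2'.symm
      linarith

/-- If `m` is a basic tuple of `p` partitions of `n` with `p ≥ 4`,
then `n ≤ |idx m| + 2`. -/
theorem ord_bound_of_basic_four (p n : ℕ) (m : Fin p → List ℕ)
    (hbasic : IsBasic p n m) (hp : 4 ≤ p) :
    (n : ℤ) ≤ |idx p n m| + 2 := by
  obtain ⟨⟨hn, htup⟩, hsum2n, hindiv⟩ := hbasic
  set e : Fin p → ℤ := fun j => (n : ℤ) - ((m j).headI : ℤ) with he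
  set d : Fin p → ℤ := fun j => dlt (m j) with hdd
  have hfacts : ∀ j, ((n : ℤ) ^ 2 - ((m j).map (fun x : ℕ => (x : ℤ) ^ 2)).sum
        = (n : ℤ) * ((n : ℤ) - ((m j).headI : ℤ)) + dlt (m j))
      ∧ 0 ≤ dlt (m j)
      ∧ 1 ≤ (n : ℤ) - ((m j).headI : ℤ)
      ∧ ((n : ℤ) - ((m j).headI : ℤ)) * (((m j).headI : ℤ) - ((n : ℤ) - ((m j).headI : ℤ)))
          ≤ dlt (m j) :=
    fun j => facts n (m j) (htup j).1 (htup j).2.1 (htup j).2.2.1 (htup j).2.2.2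
  have hidx : idx p n m = 2 * (n : ℤ) ^ 2 - ((n : ℤ) * ∑ j, e j + ∑ j, d j) := by
    unfold idx
    have hcongr : ∀ j ∈ Finset.univ, ((n : ℤ) ^ 2 - ((m j).map (fun x => (x : ℤ) ^ 2)).sum)
        = (n : ℤ) * e j + d j := by
      intro j _
      rw [idx_inner, (hfacts j).1]
    rw [Finset.sum_congr rfl hcongr, Finset.sum_add_distrib, ← Finset.mul_sum]
  have hE : 2 * (n : ℤ) ≤ ∑ j, e j := hsum2n
  have hdnn : ∀ j, 0 ≤ d j := fun j => (hfacts j).2.1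
  have hDnn : 0 ≤ ∑ j, d j := Finset.sum_nonneg fun j _ => hdnn j
  have hnn : (0 : ℤ) ≤ n := Int.natCast_nonneg n
  have hup : (n : ℤ) * ∑ j, e j + ∑ j, d j - 2 * (n : ℤ) ^ 2 ≤ |idx p n m| := by
    have h2 : (n : ℤ) * ∑ j, e j + ∑ j, d j - 2 * (n : ℤ) ^ 2 = -(idx p n m) := by
      rw [hidx]; ring
    rw [h2]
    exact neg_le_abs _
  by_cases hn2 : (n : ℤ) ≤ 2
  · have h2 : 0 ≤ (n : ℤ) * ∑ j, e j + ∑ j, d j - 2 * (n : ℤ) ^ 2 := by nlinarith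
    linarith
  push_neg at hn2
  have hn3 : (3 : ℤ) ≤ n := hn2
  by_contra hcon
  push_neg at hcon
  have hkey : (n : ℤ) * ∑ j, e j + ∑ j, d j ≤ 2 * (n : ℤ) ^ 2 + n - 3 := by linarith
  have hEeq : ∑ j, e j = 2 * (n : ℤ) := by
    by_contra hne
    have h1 : 2 * (n : ℤ) + 1 ≤ ∑ j, e j := by omega
    nlinarith
  have hDle : ∑ j, d j ≤ (n : ℤ) - 3 := by
    rw [hEeq] at hkey
    nlinarith
  have hdleD : ∀ j, d j ≤ (n : ℤ) - 3 := by
    intro j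
    have := Finset.single_le_sum (f := d) (fun i _ => hdnn i) (Finset.mem_univ j)
    linarith
  have hdquad : ∀ j, e j * ((n : ℤ) - 2 * e j) ≤ d j := by
    intro j
    have h := (hfacts j).2.2.2
    show ((n : ℤ) - ((m j).headI : ℤ)) * ((n : ℤ) - 2 * ((n : ℤ) - ((m j).headI : ℤ)))
        ≤ dlt (m j)
    calc ((n : ℤ) - ((m j).headI : ℤ)) * ((n : ℤ) - 2 * ((n : ℤ) - ((m j).headI : ℤ)))
        = ((n : ℤ) - ((m j).headI : ℤ)) * (((m j).headI : ℤ) - ((n : ℤ) - ((m j).headI : ℤ))) := by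
          ring
      _ ≤ dlt (m j) := h
  have he1 : ∀ j, 1 ≤ e j := fun j => (hfacts j).2.2.1
  have hquad : ∀ j, (n : ℤ) - 1 ≤ 2 * e j := by
    intro j
    by_contra hcon2
    push_neg at hcon2
    have h2e : 2 * e j ≤ (n : ℤ) - 2 := by omega
    have : (n : ℤ) - 2 ≤ e j * ((n : ℤ) - 2 * e j) := by nlinarith [he1 j]
    have := hdquad j
    have := hdleD j
    linarith
  by_cases hex : ∃ j₀, 2 * e j₀ ≤ (n : ℤ) - 1
  · obtain ⟨j₀, hj₀⟩ := hex
    have h0eq : 2 * e j₀ = (n : ℤ) - 1 := le_antisymm hj₀ (hquad j₀)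
    have hother : ∀ j, j ≠ j₀ → (n : ℤ) + 1 ≤ 2 * e j := by
      intro j hne
      -- not both can have 2e ≤ n - 1
      by_contra hcon2
      push_neg at hcon2
      have hjeq : 2 * e j = (n : ℤ) - 1 := by
        have := hquad j
        omega
      -- parity: 2 * e j = 2 * e j₀ gives e j = e j₀; and both d ≥ e ≥ (n-1)/2
      have hd1 : e j₀ ≤ d j₀ := by
        have := hdquad j₀
        nlinarith [he1 j₀]
      have hd2 : e j ≤ d j := by
        have := hdquad j
        nlinarith [he1 j]
      have hpairsum : d j + d j₀ ≤ ∑ i, d i := by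
        have hsub : ({j, j₀} : Finset (Fin p)) ⊆ Finset.univ := Finset.subset_univ _
        have := Finset.sum_le_sum_of_subset_of_nonneg hsub
          (fun i _ _ => hdnn i)
        rwa [Finset.sum_pair hne] at this
      have : 2 * (d j + d j₀) ≥ 2 * (e j + e j₀) := by linarith
      omega
    -- sum over erase j₀
    have hcard : (Finset.univ.erase j₀).card = p - 1 := by
      rw [Finset.card_erase_of_mem (Finset.mem_univ _), Finset.card_univ, Fintype.card_fin]
    have hbound : ((Finset.univ.erase j₀).card : ℤ) * ((n : ℤ) + 1)
        ≤ ∑ j ∈ Finset.univ.erase j₀, 2 * e j := by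
      have := Finset.card_nsmul_le_sum (Finset.univ.erase j₀) (fun j => 2 * e j)
        ((n : ℤ) + 1) (fun j hj => hother j (Finset.ne_of_mem_erase hj))
      simpa [nsmul_eq_mul] using this
    have hsplit : ∑ j ∈ Finset.univ.erase j₀, 2 * e j + 2 * e j₀ = ∑ j, 2 * e j :=
      Finset.sum_erase_add _ _ (Finset.mem_univ _)
    have htot : ∑ j, 2 * e j = 4 * (n : ℤ) := by
      rw [← Finset.mul_sum, hEeq]; ring
    have hp' : (4 : ℤ) ≤ (p : ℤ) := by exact_mod_cast hp
    have hcard' : ((Finset.univ.erase j₀).card : ℤ) = (p : ℤ) - 1 := by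
      rw [hcard]
      have : (1 : ℕ) ≤ p := by omega
      push_cast [Nat.cast_sub this]
      ring
    rw [hcard'] at hbound
    nlinarith
  · push_neg at hex
    have hge : ∀ j, (n : ℤ) ≤ 2 * e j := by
      intro j
      have := hex j
      omega
    have hall : ∀ j, 2 * e j = (n : ℤ) := by
      have hsum0 : ∑ j, (2 * e j - (n : ℤ)) = 4 * (n : ℤ) - (p : ℤ) * n := by
        rw [Finset.sum_sub_distrib, ← Finset.mul_sum, hEeq]
        simp [Finset.card_univ]
        ring
      have hle0 : ∑ j, (2 * e j - (n : ℤ)) ≤ 0 := by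
        rw [hsum0]
        have hp4 : (4 : ℤ) ≤ (p : ℤ) := by exact_mod_cast hp
        nlinarith
      have hge0 : ∀ j ∈ Finset.univ, 0 ≤ 2 * e j - (n : ℤ) := fun j _ => by linarith [hge j]
      have hzero : ∀ j ∈ Finset.univ, 2 * e j - (n : ℤ) = 0 := by
        intro j hj
        have h1 := Finset.sum_nonneg hge0
        have h2 : ∑ j, (2 * e j - (n : ℤ)) = 0 := le_antisymm hle0 h1
        exact (Finset.sum_eq_zero_iff_of_nonneg hge0).mp h2 j hj
      intro j
      have := hzero j (Finset.mem_univ j)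
      linarith
    -- each head satisfies 2 * head = n (in ℕ)
    have hhead : ∀ j, 2 * (m j).headI = n := by
      intro j
      have h1 : 2 * ((n : ℤ) - ((m j).headI : ℤ)) = (n : ℤ) := hall j
      have h2 : ((2 * (m j).headI : ℕ) : ℤ) = (n : ℤ) := by push_cast; linarith
      exact_mod_cast h2
    have hlist : ∀ j, m j = [(m j).headI, (m j).headI] := by
      intro j
      rcases dich n (m j) (htup j).1 (htup j).2.1 (htup j).2.2.1 (htup j).2.2.2 (hhead j) with
        h | h
      · exact h
      · exfalso
        have := hdleD j
        rw [hdd] at this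
        simp only at this
        linarith
    -- indivisibility
    set a₀ : ℕ := (m ⟨0, by omega⟩).headI with ha₀
    have hdvd : ∀ j, ∀ x ∈ m j, a₀ ∣ x := by
      intro j x hx
      rw [hlist j] at hx
      have hxa : x = (m j).headI := by
        rcases List.mem_cons.mp hx with h | h
        · exact h
        · simpa using h
      have : (m j).headI = a₀ := by
        have h1 := hhead j
        have h2 := hhead ⟨0, by omega⟩
        omega
      rw [hxa, this]
    have ha1 : a₀ = 1 := hindiv a₀ hdvd
    have : n = 2 := by
      have := hhead ⟨0, by omega⟩
      omega
    omega
end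

section
/- For each positive integer m, the tuple D₄^(m) = (m², m², m², m(m−1)1), consisting of four partitions of 2m, is basic for m ≥ 2 (satisfies 2n ≤ Σ_j(n − m_{j,1})) up to removal of zero parts, and has index of rigidity 2 − 2m. -/
/-- The tuple `D₄^(m) = (m², m², m², m(m−1)1)` of four partitions of `2m`. -/
def D4 (m : ℕ) : Fin 4 → List ℕ := ![[m, m], [m, m], [m, m], [m, m - 1, 1]]

/-- For `m ≥ 2`, the tuple `D₄^(m) = (m², m², m², m(m−1)1)` consists of four partitions
of `n = 2m`, satisfies the basic inequality `2n ≤ Σⱼ (n − m_{j,1})`, and has index of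
rigidity `2 − 2m`. -/
theorem D4_basic (m : ℕ) (hm : 2 ≤ m) :
    (∀ j : Fin 4, ((D4 m) j).sum = 2 * m) ∧
    (2 * ((2 * m : ℕ) : ℤ) ≤ ∑ j : Fin 4, (((2 * m : ℕ) : ℤ) - (((D4 m) j).headI : ℤ))) ∧
    idx 4 (2 * m) (D4 m) = 2 - 2 * (m : ℤ) := by
  have h1 : 1 ≤ m := le_trans (by norm_num) hm
  have hc : ((m - 1 : ℕ) : ℤ) = (m : ℤ) - 1 := by
    omega
  refine ⟨?_, ?_, ?_⟩
  · intro j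
    fin_cases j <;> simp [D4] <;> omega
  · simp [D4, Fin.sum_univ_four]
    nlinarith [sq_nonneg ((m:ℤ) - 1)]
  · simp [idx, D4, Fin.sum_univ_four, hc]
    ring
end

section
/- For each positive integer m, the tuple E₈^(m) = ((3m)², (2m)³, m⁵(m−1)1) of three partitions of n = 6m has index of rigidity 2 − 2m, and its order 6m attains the bound ord ≤ 3|idx| + 6. -/
/-- For each positive integer `m`, the tuple `E₈^(m) = ((3m)², (2m)³, m⁵(m−1)1)` of three
partitions of `n = 6m` has index of rigidity `2 − 2m`, and its order `6m` attains the
bound `ord ≤ 3|idx| + 6`. -/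
theorem E8_attains_bound (m : ℕ) (hm : 1 ≤ m) :
    (∀ j : Fin 3, ((![[3 * m, 3 * m], [2 * m, 2 * m, 2 * m],
        [m, m, m, m, m, m - 1, 1]] : Fin 3 → List ℕ) j).sum = 6 * m) ∧
    idx 3 (6 * m) (![[3 * m, 3 * m], [2 * m, 2 * m, 2 * m], [m, m, m, m, m, m - 1, 1]])
      = 2 - 2 * (m : ℤ) ∧
    (6 * m : ℤ) = 3 * |idx 3 (6 * m)
      (![[3 * m, 3 * m], [2 * m, 2 * m, 2 * m], [m, m, m, m, m, m - 1, 1]])| + 6 := by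
  obtain ⟨k, rfl⟩ := Nat.exists_eq_add_of_le hm
  have hidx : idx 3 (6 * (1 + k)) (![[3 * (1 + k), 3 * (1 + k),],
      [2 * (1 + k), 2 * (1 + k), 2 * (1 + k)],
      [1 + k, 1 + k, 1 + k, 1 + k, 1 + k, 1 + k - 1, 1]]) = 2 - 2 * ((1 + k : ℕ) : ℤ) := by
    simp [idx, Fin.sum_univ_three]
    ring
  refine ⟨?_, hidx, ?_⟩
  · intro j
    fin_cases j <;> simp <;> omega
  · rw [hidx]
    have : |2 - 2 * ((1 + k : ℕ) : ℤ)| = 2 * k := by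
      push_cast; rw [abs_of_nonpos] <;> ring_nf
      omega
    rw [this]
    push_cast
    ring
end

section
/- Under the correspondence n_{j,k} = m_{j,k+1} + ... + m_{j,n_j} and n = m_{j,1} + ... + m_{j,n_j}, the Kac-Moody norm satisfies (α|α) = 2n² − Σ_{j=0}^{p−1}(n² − Σ_{ν=1}^{n_j} m_{j,ν}²) = idx(m). -/
/-- Index set of the simple roots of the star-shaped Kac-Moody root system:
`none` is `α₀`, and `some (j, ν)` is `α_{j,ν+1}` (for `j ≥ 0`, `ν ≥ 0`). -/
abbrev KMIndex := Option (ℕ × ℕ)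

/-- The symmetric bilinear form on the simple roots: `(α|α) = 2` on simple roots,
`(α₀|α_{j,ν}) = −δ_{ν,1}`, `(α_{i,μ}|α_{j,ν}) = −1` iff `i = j` and `|μ−ν| = 1`, else `0`. -/
def KMC : KMIndex → KMIndex → ℤ
  | none, none => 2
  | none, some (_, ν) => if ν = 0 then -1 else 0
  | some (_, μ), none => if μ = 0 then -1 else 0
  | some (i, μ), some (j, ν) =>
      if i = j then (if μ = ν then 2 else if μ + 1 = ν ∨ ν + 1 = μ then -1 else 0) else 0

/-- The root lattice `Q`: finitely supported integer combinations of simple roots. -/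
abbrev KM := KMIndex →₀ ℤ

/-- The symmetric bilinear form `( | )` on the root lattice. -/
def KMform (x y : KM) : ℤ :=
  ∑ i ∈ x.support, ∑ j ∈ y.support, x i * y j * KMC i j

lemma len_le_sum (l : List ℕ) (h : ∀ x ∈ l, 0 < x) : l.length ≤ l.sum := by
  induction l with
  | nil => simp
  | cons x t ih =>
    simp only [List.length_cons, List.sum_cons]
    have hx := h x (by simp)
    have := ih (fun y hy => h y (by simp [hy]))
    omega

lemma sq_sum_cons (x : ℕ) (t : List ℕ) :
    (((x :: t : List ℕ)).map (fun y => (y:ℤ)^2)).sum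
      = (x:ℤ)^2 + (t.map (fun y => (y:ℤ)^2)).sum := by simp

lemma leg_sum (l : List ℕ) (N : ℕ) (hN : l.length ≤ N) :
    2 * ∑ ν ∈ Finset.range N, ((l.drop (ν+1)).sum : ℤ)^2
      - 2 * ∑ ν ∈ Finset.range N, ((l.drop ν).sum : ℤ) * ((l.drop (ν+1)).sum : ℤ)
    = (l.map (fun x => (x:ℤ)^2)).sum - (l.sum : ℤ)^2 := by
  induction l generalizing N with
  | nil => simp
  | cons x t ih =>
    obtain ⟨M, rfl⟩ : ∃ M, N = M + 1 := ⟨N - 1, by simp at hN; omega⟩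
    rw [Finset.sum_range_succ' (fun ν => ((List.drop (ν+1) (x::t)).sum : ℤ)^2),
        Finset.sum_range_succ' (fun ν => ((List.drop ν (x::t)).sum : ℤ) * ((List.drop (ν+1) (x::t)).sum : ℤ)),
        sq_sum_cons]
    simp only [List.drop_succ_cons, List.drop_zero, List.sum_cons, Nat.cast_add]
    have ht : t.length ≤ M := by simp at hN; omega
    have := ih M ht
    linarith

lemma chain_sum (b : ℕ → ℤ) (N : ℕ) :
    ∑ μ ∈ Finset.range N, ∑ ν ∈ Finset.range N,
        b μ * b ν * (if μ = ν then 2 else if μ + 1 = ν ∨ ν + 1 = μ then (-1:ℤ) else 0)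
      = 2 * ∑ ν ∈ Finset.range N, (b ν)^2
        - 2 * ∑ ν ∈ Finset.range (N-1), b ν * b (ν+1) := by
  induction N with
  | zero => simp
  | succ N ih =>
    have hin : ∀ μ, ∑ ν ∈ Finset.range (N+1),
        b μ * b ν * (if μ = ν then 2 else if μ + 1 = ν ∨ ν + 1 = μ then (-1:ℤ) else 0)
      = (∑ ν ∈ Finset.range N,
        b μ * b ν * (if μ = ν then 2 else if μ + 1 = ν ∨ ν + 1 = μ then (-1:ℤ) else 0))
        + b μ * b N * (if μ = N then 2 else if μ + 1 = N ∨ N + 1 = μ then (-1:ℤ) else 0) :=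
      fun μ => Finset.sum_range_succ _ _
    rw [Finset.sum_range_succ, Finset.sum_congr rfl (fun μ _ => hin μ), Finset.sum_add_distrib, ih]
    have hc1 : ∑ μ ∈ Finset.range N, b μ * b N *
        (if μ = N then 2 else if μ + 1 = N ∨ N + 1 = μ then (-1:ℤ) else 0)
      = ∑ μ ∈ Finset.range N, (if μ = N - 1 ∧ 1 ≤ N then -(b μ * b N) else 0) := by
      refine Finset.sum_congr rfl (fun μ hμ => ?_)
      simp only [Finset.mem_range] at hμ
      have hne : μ ≠ N := by omega
      by_cases h : μ + 1 = N
      · rw [if_neg hne, if_pos (Or.inl h), if_pos (by omega : μ = N - 1 ∧ 1 ≤ N)]; ring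
      · rw [if_neg hne, if_neg (by omega : ¬(μ + 1 = N ∨ N + 1 = μ)),
            if_neg (by omega : ¬(μ = N - 1 ∧ 1 ≤ N))]; ring
    have hc2 : ∑ ν ∈ Finset.range N, b N * b ν *
        (if N = ν then 2 else if N + 1 = ν ∨ ν + 1 = N then (-1:ℤ) else 0)
      = ∑ ν ∈ Finset.range N, (if ν = N - 1 ∧ 1 ≤ N then -(b N * b ν) else 0) := by
      refine Finset.sum_congr rfl (fun ν hν => ?_)
      simp only [Finset.mem_range] at hν
      have hne : N ≠ ν := by omega
      by_cases h : ν + 1 = N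
      · rw [if_neg hne, if_pos (Or.inr h), if_pos (by omega : ν = N - 1 ∧ 1 ≤ N)]; ring
      · rw [if_neg hne, if_neg (by omega : ¬(N + 1 = ν ∨ ν + 1 = N)),
            if_neg (by omega : ¬(ν = N - 1 ∧ 1 ≤ N))]; ring
    rw [hin N, hc1, hc2]
    rcases Nat.eq_zero_or_pos N with rfl | hN
    · simp; ring
    · have he : ∀ c : ℕ → ℤ, ∑ μ ∈ Finset.range N, (if μ = N - 1 ∧ 1 ≤ N then -(c μ) else 0)
          = -(c (N-1)) := by
        intro c
        rw [show (fun μ => if μ = N - 1 ∧ 1 ≤ N then -(c μ) else 0)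
            = (fun μ => if μ = N - 1 then -(c μ) else 0) from funext (fun μ => by
              rcases eq_or_ne μ (N-1) with h|h
              · rw [if_pos ⟨h, hN⟩, if_pos h]
              · rw [if_neg (fun hc => h hc.1), if_neg h])]
        rw [Finset.sum_ite_eq' (Finset.range N) (N-1) (fun μ => -(c μ))]
        simp [Nat.sub_lt hN]
      rw [he, he]
      obtain ⟨K, rfl⟩ : ∃ K, N = K + 1 := ⟨N - 1, by omega⟩
      simp only [Nat.add_sub_cancel]
      rw [Finset.sum_range_succ (fun ν => (b ν)^2) (K+1),
          Finset.sum_range_succ (fun ν => b ν * b (ν+1)) K,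
          if_pos trivial]
      ring

lemma KMform_eq_sum_subset (x y : KM) (S : Finset KMIndex)
    (hx : x.support ⊆ S) (hy : y.support ⊆ S) :
    KMform x y = ∑ i ∈ S, ∑ j ∈ S, x i * y j * KMC i j := by
  unfold KMform
  rw [Finset.sum_subset hx (fun i _ hi => by
    simp [Finsupp.notMem_support_iff.mp hi])]
  exact Finset.sum_congr rfl (fun i _ => Finset.sum_subset hy (fun j _ hj => by
    simp [Finsupp.notMem_support_iff.mp hj]))


/-- Under the correspondence `n_{j,k} = m_{j,k+1} + ⋯ + m_{j,n_j}`, `n = m_{j,1} + ⋯`,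
the Kac-Moody norm of `α = n·α₀ + Σ n_{j,ν} α_{j,ν}` equals the index of rigidity
`idx m = 2n² − Σⱼ (n² − Σ_ν m_{j,ν}²)`. (Recall `α (some (j, ν))` is the coefficient of
`α_{j,ν+1}`, which is `n_{j,ν+1} = (drop (ν+1) (m j)).sum`.) -/
theorem KM_norm_eq_idx (p n : ℕ) (m : Fin p → List ℕ) (α : KM)
    (hpos : ∀ j, ∀ x ∈ m j, 0 < x) (hsum : ∀ j, (m j).sum = n)
    (h0 : α none = (n : ℤ))
    (hjν : ∀ j ν : ℕ, α (some (j, ν)) =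
      if h : j < p then ((((m ⟨j, h⟩).drop (ν + 1)).sum : ℕ) : ℤ) else 0) :
    KMform α α = idx p n m := by
  classical
  rcases Nat.eq_zero_or_pos n with rfl | hn
  · -- n = 0 : everything vanishes
    have hm : ∀ j, m j = [] := by
      intro j
      have hs := hsum j
      cases hmj : m j with
      | nil => rfl
      | cons x t =>
        exfalso
        have hx := hpos j x (by rw [hmj]; simp)
        rw [hmj] at hs; simp at hs; omega
    have hα : ∀ i, α i = 0 := by
      intro i
      match i with
      | none => simpa using h0
      | some (j, ν) =>
        rw [hjν j ν]
        split
        · rename_i h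
          rw [hm ⟨j, h⟩]; simp
        · rfl
    have hsupp : α.support = ∅ := by
      ext i; simp [hα]
    rw [KMform, hsupp]
    simp [idx, hm]
  · -- n > 0
    set T : Finset (ℕ × ℕ) := Finset.range p ×ˢ Finset.range n with hT
    set Timg : Finset KMIndex := T.image (fun q => some q) with hTimg
    have hnone : (none : KMIndex) ∉ Timg := by simp [hTimg]
    have hsub : α.support ⊆ insert none Timg := by
      intro i hi
      match i with
      | none => exact Finset.mem_insert_self _ _
      | some (j, ν) =>
        have hne : α (some (j,ν)) ≠ 0 := Finsupp.mem_support_iff.mp hi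
        rw [hjν j ν] at hne
        by_cases hj : j < p
        · rw [dif_pos hj] at hne
          have hd : ((m ⟨j, hj⟩).drop (ν+1)).sum ≠ 0 := by
            intro h; rw [h] at hne; simp at hne
          have hlen : ν + 1 < (m ⟨j, hj⟩).length := by
            by_contra h
            rw [List.drop_eq_nil_of_le (by omega)] at hd
            simp at hd
          have hls : (m ⟨j, hj⟩).length ≤ n := by
            rw [← hsum ⟨j, hj⟩]; exact len_le_sum _ (hpos ⟨j, hj⟩)
          refine Finset.mem_insert_of_mem ?_
          rw [hTimg]
          refine Finset.mem_image.mpr ⟨(j, ν), ?_, rfl⟩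
          rw [hT, Finset.mem_product]
          constructor <;> simp <;> omega
        · rw [dif_neg hj] at hne; exact absurd rfl hne
    rw [KMform_eq_sum_subset α α _ hsub hsub]
    have himg : ∀ F : KMIndex → ℤ, ∑ q ∈ Timg, F q
        = ∑ j ∈ Finset.range p, ∑ ν ∈ Finset.range n, F (some (j, ν)) := by
      intro F
      rw [hTimg, Finset.sum_image (fun x _ y _ h => by simpa using h), hT,
          Finset.sum_product]
    rw [Finset.sum_insert hnone, Finset.sum_insert hnone,
        Finset.sum_congr rfl (fun i _ =>
          Finset.sum_insert (f := fun j => α i * α j * KMC i j) hnone),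
        himg, himg]
    -- abbreviation
    set a : ℕ → ℕ → ℤ := fun j ν => α (some (j, ν)) with ha
    -- piece A
    have hA : α none * α none * KMC none none = 2 * (n:ℤ)^2 := by
      rw [h0]; show (n:ℤ) * n * 2 = 2 * n^2; ring
    -- piece B
    have hB : ∀ j ∈ Finset.range p, ∑ ν ∈ Finset.range n,
        α none * α (some (j, ν)) * KMC none (some (j, ν)) = -((n:ℤ) * a j 0) := by
      intro j _
      have : ∀ ν ∈ Finset.range n, α none * α (some (j,ν)) * KMC none (some (j,ν))
          = if ν = 0 then -((n:ℤ) * a j 0) else 0 := by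
        intro ν _
        rcases eq_or_ne ν 0 with rfl | h
        · rw [h0]; show (n:ℤ) * a j 0 * (if (0:ℕ) = 0 then -1 else 0) = _; simp
        · show α none * a j ν * (if ν = 0 then -1 else 0) = _
          rw [if_neg h, if_neg h, mul_zero]
      rw [Finset.sum_congr rfl this,
          Finset.sum_ite_eq' (Finset.range n) 0 (fun _ => -((n:ℤ) * a j 0)),
          if_pos (Finset.mem_range.mpr hn)]
    -- per-column piece: C + D
    have hCD : ∀ j ∈ Finset.range p, ∑ ν ∈ Finset.range n,
        (α (some (j,ν)) * α none * KMC (some (j,ν)) none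
          + ∑ q ∈ Timg, α (some (j,ν)) * α q * KMC (some (j,ν)) q)
        = -(a j 0 * (n:ℤ))
          + (2 * ∑ ν ∈ Finset.range n, (a j ν)^2
             - 2 * ∑ ν ∈ Finset.range (n-1), a j ν * a j (ν+1)) := by
      intro j hj
      rw [Finset.sum_congr rfl (fun ν _ => by
        rw [himg (fun q => α (some (j,ν)) * α q * KMC (some (j,ν)) q)] : ∀ ν ∈ Finset.range n,
          α (some (j,ν)) * α none * KMC (some (j,ν)) none
            + ∑ q ∈ Timg, α (some (j,ν)) * α q * KMC (some (j,ν)) q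
          = α (some (j,ν)) * α none * KMC (some (j,ν)) none
            + ∑ i ∈ Finset.range p, ∑ μ ∈ Finset.range n,
                α (some (j,ν)) * α (some (i,μ)) * KMC (some (j,ν)) (some (i,μ)))]
      rw [Finset.sum_add_distrib]
      congr 1
      · -- C part
        have : ∀ ν ∈ Finset.range n, α (some (j,ν)) * α none * KMC (some (j,ν)) none
            = if ν = 0 then -(a j 0 * (n:ℤ)) else 0 := by
          intro ν _
          rcases eq_or_ne ν 0 with rfl | h
          · rw [h0]; show a j 0 * (n:ℤ) * (if (0:ℕ) = 0 then -1 else 0) = _; simp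
          · show a j ν * α none * (if ν = 0 then -1 else 0) = _
            rw [if_neg h, if_neg h, mul_zero]
        rw [Finset.sum_congr rfl this,
            Finset.sum_ite_eq' (Finset.range n) 0 (fun _ => -(a j 0 * (n:ℤ))),
            if_pos (Finset.mem_range.mpr hn)]
      · -- D part
        have hred : ∀ ν ∈ Finset.range n,
            ∑ i ∈ Finset.range p, ∑ μ ∈ Finset.range n,
              α (some (j,ν)) * α (some (i,μ)) * KMC (some (j,ν)) (some (i,μ))
            = ∑ μ ∈ Finset.range n, a j ν * a j μ *
                (if ν = μ then 2 else if ν + 1 = μ ∨ μ + 1 = ν then (-1:ℤ) else 0) := by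
          intro ν _
          have h1 : ∀ i ∈ Finset.range p, ∑ μ ∈ Finset.range n,
              α (some (j,ν)) * α (some (i,μ)) * KMC (some (j,ν)) (some (i,μ))
              = if j = i then (∑ μ ∈ Finset.range n, a j ν * a i μ *
                  (if ν = μ then 2 else if ν + 1 = μ ∨ μ + 1 = ν then (-1:ℤ) else 0)) else 0 := by
            intro i _
            have h2 : ∀ μ ∈ Finset.range n,
                α (some (j,ν)) * α (some (i,μ)) * KMC (some (j,ν)) (some (i,μ))
                = if j = i then a j ν * a i μ *
                    (if ν = μ then 2 else if ν + 1 = μ ∨ μ + 1 = ν then (-1:ℤ) else 0) else 0 := by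
              intro μ _
              show a j ν * a i μ * (if j = i then _ else 0) = _
              rcases eq_or_ne j i with rfl | h
              · rw [if_pos rfl, if_pos rfl]
              · rw [if_neg h, if_neg h, mul_zero]
            rw [Finset.sum_congr rfl h2]
            split_ifs <;> simp
          rw [Finset.sum_congr rfl h1,
              Finset.sum_ite_eq (Finset.range p) j _, if_pos hj]
        rw [Finset.sum_congr rfl hred]
        exact chain_sum (a j) n
    beta_reduce
    rw [Finset.sum_congr rfl hB, Finset.sum_congr rfl hCD, hA]
    -- per-leg evaluation
    have hleg : ∀ j ∈ Finset.range p,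
        -((n:ℤ) * a j 0) + (-(a j 0 * (n:ℤ))
          + (2 * ∑ ν ∈ Finset.range n, (a j ν)^2
             - 2 * ∑ ν ∈ Finset.range (n-1), a j ν * a j (ν+1)))
        = (if h : j < p then ((m ⟨j, h⟩).map (fun x => (x:ℤ)^2)).sum else 0) - (n:ℤ)^2 := by
      intro j hj
      have hjp : j < p := Finset.mem_range.mp hj
      set l := m ⟨j, hjp⟩ with hl
      have hav : ∀ ν, a j ν = ((l.drop (ν+1)).sum : ℤ) := by
        intro ν; rw [ha]; simp only []; rw [hjν j ν, dif_pos hjp]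
      have hlen : l.length ≤ n := by
        rw [← hsum ⟨j, hjp⟩]; exact len_le_sum _ (hpos ⟨j, hjp⟩)
      have key := leg_sum l n hlen
      have hshift : ∑ ν ∈ Finset.range n, ((l.drop ν).sum : ℤ) * ((l.drop (ν+1)).sum : ℤ)
          = (∑ ν ∈ Finset.range (n-1), ((l.drop (ν+1)).sum : ℤ) * ((l.drop (ν+2)).sum : ℤ))
            + ((l.drop 0).sum : ℤ) * ((l.drop 1).sum : ℤ) := by
        obtain ⟨K, hK⟩ : ∃ K, n = K + 1 := ⟨n - 1, by omega⟩
        rw [hK]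
        rw [Finset.sum_range_succ' (fun ν => ((l.drop ν).sum : ℤ) * ((l.drop (ν+1)).sum : ℤ)) K]
        simp [Nat.add_sub_cancel]
      have hd0 : ((l.drop 0).sum : ℤ) = (n:ℤ) := by
        rw [List.drop_zero, hl, hsum ⟨j, hjp⟩]
      rw [dif_pos hjp, ← hl]
      simp only [hav]
      rw [hshift, hd0] at key
      -- a j 0 = drop 1 sum
      have hsl : (l.sum : ℤ) = (n:ℤ) := by rw [hl, hsum ⟨j, hjp⟩]
      rw [hsl] at key
      linarith [key]
    rw [add_assoc, ← Finset.sum_add_distrib, Finset.sum_congr rfl hleg]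
    -- finish: compare with idx
    rw [idx, Finset.sum_sub_distrib]
    have hfin : ∑ j : Fin p, ((n:ℤ)^2 - ((m j).map (fun x => (x:ℤ)^2)).sum)
        = ∑ j ∈ Finset.range p,
            ((n:ℤ)^2 - (if h : j < p then ((m ⟨j, h⟩).map (fun x => (x:ℤ)^2)).sum else 0)) := by
      rw [← Fin.sum_univ_eq_sum_range
        (fun k => ((n:ℤ)^2 - (if h : k < p then ((m ⟨k, h⟩).map (fun x => (x:ℤ)^2)).sum else 0))) p]
      refine Finset.sum_congr rfl (fun j _ => ?_)
      rw [dif_pos j.isLt]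
    rw [hfin, Finset.sum_sub_distrib]
    simp only [Finset.sum_const, Finset.card_range, nsmul_eq_mul]
    ring
end
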